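/- Let r > 0, reals 0 ≤ Φ < Φ′, C > 0, c′ ∈ (0,∞), and a < 0. Let W : ℝ → ℝ vanish on (−∞,0), be continuous and nondecreasing on [0,∞), be continuously differentiable on (0,∞) with W′(y) ≤ C·e^{Φy} for all y > 0, and satisfy ∫₀^∞ e^{−Φ′z}·W(z) dz = 1/r. Let V : ℝ → ℝ be nonnegative, vanish on (−∞,0), with x ↦ e^{−Φ′x}·V(x) nondecreasing on (0,∞) and converging to c′ as x → ∞. Then lim_{b→∞} [W′(b−a) + r·∫₀ᵇ V(b−y)·W′(y−a) dy] / V(b) = Φ′·e^{−Φ′a}·(1 − r·∫₀^{−a} e^{−Φ′z}W(z)dz) − r·W(−a). -/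

import Mathlib

open MeasureTheory Filter Set
open Real

/-!
Write `V x = e^{Φ' x} g x`, so that `g` increases to `c'`. Dividing by `V b` turns the numerator
into `e^{-Φ' b} W'(b - a) / g b + r ∫₀ᵇ (g (b - y) / g b) e^{-Φ' y} W'(y - a) dy`. The first term
vanishes because `W'` grows at most at rate `Φ < Φ'`. In the second, the ratio `g (b - y) / g b`
tends to `1` and is eventually bounded by `2`, so dominated convergence gives
`r ∫₀^∞ e^{-Φ' y} W'(y - a) dy`; integrating by parts on `(-a, ∞)` evaluates this through the
Laplace transform `∫₀^∞ e^{-Φ' z} W z dz = 1 / r`.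
-/

theorem MonotoneOn.le_of_tendsto_Ioi {g : ℝ → ℝ} {c x₀ x : ℝ} (hg : MonotoneOn g (Ioi x₀))
    (hlim : Tendsto g atTop (nhds c)) (hx : x₀ < x) : g x ≤ c :=
  ge_of_tendsto hlim <| (eventually_ge_atTop x).mono fun _ hy ↦
    hg hx (hx.trans_le hy) hy

theorem MonotoneOn.deriv_nonneg_of_mem_interior {f : ℝ → ℝ} {s : Set ℝ} {x : ℝ}
    (hf : MonotoneOn f s) (hx : x ∈ interior s) : 0 ≤ deriv f x := by
  rw [← derivWithin_of_mem_nhds (mem_interior_iff_mem_nhds.1 hx)]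
  exact hf.derivWithin_nonneg

theorem integral_Ioi_comp_sub_right {E : Type*} [NormedAddCommGroup E] [NormedSpace ℝ E]
    (f : ℝ → E) (a d : ℝ) : ∫ x in Ioi a, f (x - d) = ∫ x in Ioi (a - d), f x := by
  have := (measurePreserving_sub_right volume d).setIntegral_preimage_emb
    (measurableEmbedding_subRight d) f (Ioi (a - d))
  rwa [preimage_sub_const_Ioi, sub_add_cancel] at this

theorem exp_neg_mul_mul_exp_mul (t s x : ℝ) :
    exp (-t * x) * exp (s * x) = exp (-(t - s) * x) := by
  rw [← exp_add]; ring_nf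

theorem integrableOn_exp_neg_mul_mul_of_norm_le {f : ℝ → ℝ} {C s t x₀ : ℝ} (hst : s < t)
    (hfm : AEStronglyMeasurable f (volume.restrict (Ioi x₀)))
    (hf : ∀ x > x₀, ‖f x‖ ≤ C * exp (s * x)) :
    IntegrableOn (fun x ↦ exp (-t * x) * f x) (Ioi x₀) := by
  refine ((exp_neg_integrableOn_Ioi x₀ (sub_pos.2 hst)).const_mul C).mono'
    ((continuous_exp.comp (continuous_const_mul _)).aestronglyMeasurable.mul hfm) ?_
  filter_upwards [ae_restrict_mem measurableSet_Ioi] with x hx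
  rw [norm_mul, norm_of_nonneg (exp_pos _).le]
  calc exp (-t * x) * ‖f x‖ ≤ exp (-t * x) * (C * exp (s * x)) :=
        mul_le_mul_of_nonneg_left (hf x hx) (exp_pos _).le
    _ = C * exp (-(t - s) * x) := by rw [← exp_neg_mul_mul_exp_mul]; ring

theorem tendsto_exp_neg_mul_mul_of_norm_le {f : ℝ → ℝ} {C s t : ℝ} (hst : s < t)
    (hf : ∀ᶠ x in atTop, ‖f x‖ ≤ C * exp (s * x)) :
    Tendsto (fun x ↦ exp (-t * x) * f x) atTop (nhds 0) := by
  have hdecay : Tendsto (fun x ↦ C * exp (-(t - s) * x)) atTop (nhds 0) := by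
    simpa using ((tendsto_exp_atBot.comp
      (tendsto_id.const_mul_atTop_of_neg (neg_lt_zero.2 (sub_pos.2 hst))))).const_mul C
  refine squeeze_zero_norm' ?_ hdecay
  filter_upwards [hf] with x hx
  rw [norm_mul, norm_of_nonneg (exp_pos _).le]
  calc exp (-t * x) * ‖f x‖ ≤ exp (-t * x) * (C * exp (s * x)) :=
        mul_le_mul_of_nonneg_left hx (exp_pos _).le
    _ = C * exp (-(t - s) * x) := by rw [← exp_neg_mul_mul_exp_mul]; ring

theorem norm_comp_sub_le_exp {f : ℝ → ℝ} {C s a : ℝ} (hf : ∀ x > 0, ‖f x‖ ≤ C * exp (s * x))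
    (y : ℝ) (hy : a < y) : ‖f (y - a)‖ ≤ C * exp (-s * a) * exp (s * y) := by
  rw [mul_assoc, ← exp_add]
  convert hf (y - a) (sub_pos.2 hy) using 3
  ring

theorem integral_Ioi_exp_neg_mul_mul_deriv {f : ℝ → ℝ} {l x₀ : ℝ}
    (hf : ∀ x ≥ x₀, DifferentiableAt ℝ f x)
    (hfi : IntegrableOn (fun x ↦ exp (-l * x) * f x) (Ioi x₀))
    (hf'i : IntegrableOn (fun x ↦ exp (-l * x) * deriv f x) (Ioi x₀)) :
    ∫ x in Ioi x₀, exp (-l * x) * deriv f x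
      = l * (∫ x in Ioi x₀, exp (-l * x) * f x) - exp (-l * x₀) * f x₀ := by
  have hderiv : ∀ x ≥ x₀, HasDerivAt (fun x ↦ exp (-l * x) * f x)
      (-l * (exp (-l * x) * f x) + exp (-l * x) * deriv f x) x := fun x hx ↦ by
    have hexp : HasDerivAt (fun x ↦ exp (-l * x)) (exp (-l * x) * -l) x := by
      simpa using ((hasDerivAt_id x).const_mul (-l)).exp
    exact (hexp.mul (hf x hx).hasDerivAt).congr_deriv (by ring)
  have hF'i := (hfi.const_mul (-l)).add hf'i
  have hlim := tendsto_zero_of_hasDerivAt_of_integrableOn_Ioi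
    (fun x hx ↦ hderiv x (le_of_lt hx)) hF'i hfi
  have hFTC : ∫ x in Ioi x₀, (-l * (exp (-l * x) * f x) + exp (-l * x) * deriv f x)
      = 0 - exp (-l * x₀) * f x₀ :=
    integral_Ioi_of_hasDerivAt_of_tendsto' hderiv hF'i hlim
  rw [integral_add (hfi.const_mul (-l)) hf'i, integral_const_mul] at hFTC
  linear_combination hFTC

theorem integral_Ioi_exp_neg_mul_mul_deriv_comp_sub {f : ℝ → ℝ} {l a : ℝ} (ha : a ≤ 0)
    (hf : ∀ x ≥ -a, DifferentiableAt ℝ f x)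
    (hfi : IntegrableOn (fun x ↦ exp (-l * x) * f x) (Ioi 0))
    (hf'i : IntegrableOn (fun x ↦ exp (-l * x) * deriv f x) (Ioi (-a))) :
    ∫ y in Ioi 0, exp (-l * y) * deriv f (y - a)
      = l * exp (-l * a) * ((∫ z in Ioi 0, exp (-l * z) * f z)
          - ∫ z in (0:ℝ)..(-a), exp (-l * z) * f z) - f (-a) := by
  have hfactor : ∀ y, exp (-l * y) * deriv f (y - a)
      = exp (-l * a) * (exp (-l * (y - a)) * deriv f (y - a)) := fun y ↦ by
    rw [← mul_assoc, ← exp_add]; ring_nf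
  have hexp : exp (-l * a) * exp (-l * -a) = 1 := by rw [← exp_add]; ring_nf; exact exp_zero
  simp_rw [hfactor]
  rw [integral_const_mul, integral_Ioi_comp_sub_right (fun z ↦ exp (-l * z) * deriv f z), zero_sub,
    integral_Ioi_exp_neg_mul_mul_deriv hf (hfi.mono_set (Ioi_subset_Ioi (neg_nonneg.2 ha))) hf'i,
    ← intervalIntegral.integral_Ioi_sub_Ioi hfi (neg_nonneg.2 ha), sub_sub_cancel]
  linear_combination (-f (-a)) * hexp

theorem tendsto_intervalIntegral_div_mul {g k : ℝ → ℝ} {c : ℝ} (hc : 0 < c)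
    (hg_nonneg : ∀ x > 0, 0 ≤ g x) (hg_mono : MonotoneOn g (Ioi 0))
    (hg : Tendsto g atTop (nhds c)) (hk : IntegrableOn k (Ioi 0)) :
    Tendsto (fun b ↦ ∫ y in (0:ℝ)..b, g (b - y) / g b * k y) atTop
      (nhds (∫ y in Ioi 0, k y)) := by
  set F : ℝ → ℝ → ℝ := fun b ↦ (Ioo 0 b).indicator fun y ↦ g (b - y) / g b * k y
  have hF_meas : ∀ b, AEStronglyMeasurable (F b) (volume.restrict (Ioi 0)) := fun b ↦ by
    rw [aestronglyMeasurable_indicator_iff measurableSet_Ioo,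
      Measure.restrict_restrict measurableSet_Ioo, inter_eq_left.2 Ioo_subset_Ioi_self]
    have hanti : AntitoneOn (fun y ↦ g (b - y)) (Ioo 0 b) := fun y hy z hz hyz ↦
      hg_mono (sub_pos.2 hz.2) (sub_pos.2 hy.2) (by linarith)
    exact ((aemeasurable_restrict_of_antitoneOn measurableSet_Ioo hanti).div_const _
      ).aestronglyMeasurable.mul (hk.aestronglyMeasurable.mono_set Ioo_subset_Ioi_self)
  have hF_bound : ∀ᶠ b in atTop, ∀ᵐ y ∂volume.restrict (Ioi 0), ‖F b y‖ ≤ 2 * ‖k y‖ := by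
    filter_upwards [hg.eventually (eventually_gt_nhds (half_lt_self hc))] with b hb
    refine ae_of_all _ fun y ↦ ?_
    by_cases hy : y ∈ Ioo 0 b
    · have hby : 0 < b - y := sub_pos.2 hy.2
      have hratio : ‖g (b - y) / g b‖ ≤ 2 := by
        rw [norm_div, Real.norm_of_nonneg (hg_nonneg _ hby),
          Real.norm_of_nonneg (hg_nonneg _ (hy.1.trans hy.2)), div_le_iff₀ (by linarith)]
        linarith [hg_mono.le_of_tendsto_Ioi hg hby]
      rw [show F b y = _ from indicator_of_mem hy _, norm_mul]
      exact mul_le_mul_of_nonneg_right hratio (norm_nonneg _)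
    · rw [show F b y = 0 from indicator_of_notMem hy _, norm_zero]
      positivity
  have hF_lim : ∀ᵐ y ∂volume.restrict (Ioi 0), Tendsto (F · y) atTop (nhds (k y)) := by
    filter_upwards [ae_restrict_mem measurableSet_Ioi] with y hy
    have hshift : Tendsto (fun b ↦ g (b - y)) atTop (nhds c) :=
      hg.comp (tendsto_atTop_add_const_right _ (-y) tendsto_id)
    have hlim := (hshift.div hg hc.ne').mul_const (k y)
    rw [div_self hc.ne', one_mul] at hlim
    refine hlim.congr' ?_
    filter_upwards [eventually_gt_atTop y] with b hb
    exact (indicator_of_mem (show y ∈ Ioo 0 b from ⟨hy, hb⟩) fun y ↦ g (b - y) / g b * k y).symm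
  refine (tendsto_integral_filter_of_dominated_convergence _ (Eventually.of_forall hF_meas)
    hF_bound (hk.norm.const_mul 2) hF_lim).congr' ?_
  filter_upwards [eventually_ge_atTop 0] with b hb
  rw [intervalIntegral.integral_of_le hb, integral_Ioc_eq_integral_Ioo,
    setIntegral_indicator measurableSet_Ioo, inter_eq_right.2 Ioo_subset_Ioi_self]

theorem convolution_div_eq_of_eq_exp_mul {V g h : ℝ → ℝ} {l b : ℝ} (u r : ℝ)
    (hV : ∀ x, V x = exp (l * x) * g x) (hb : g b ≠ 0) :
    (u + r * ∫ y in (0:ℝ)..b, V (b - y) * h y) / V b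
      = exp (-l * b) * u / g b + r * ∫ y in (0:ℝ)..b, g (b - y) / g b * (exp (-l * y) * h y) := by
  have hconv : ∫ y in (0:ℝ)..b, V (b - y) * h y
      = exp (l * b) * g b * ∫ y in (0:ℝ)..b, g (b - y) / g b * (exp (-l * y) * h y) := by
    rw [← intervalIntegral.integral_const_mul]
    refine intervalIntegral.integral_congr fun y _ ↦ ?_
    rw [hV (b - y), show l * (b - y) = l * b + -l * y by ring, exp_add]
    field_simp
  rw [hconv, hV b, neg_mul, exp_neg]
  field_simp

theorem stmt_18_general (r Φ Φ' C c' a : ℝ) (hr : 0 < r) (hΦΦ' : Φ < Φ')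
    (hc' : 0 < c') (ha : a < 0)
    (W V : ℝ → ℝ)
    (hWmono : MonotoneOn W (Set.Ici 0))
    (hWdiff : ∀ y > (0:ℝ), DifferentiableAt ℝ W y)
    (hWderivbound : ∀ y > (0:ℝ), deriv W y ≤ C * Real.exp (Φ * y))
    (hWlap : (∫ z in Set.Ioi (0:ℝ), Real.exp (-Φ' * z) * W z) = 1 / r)
    (hVnn : ∀ x, 0 ≤ V x)
    (hVmono : MonotoneOn (fun x => Real.exp (-Φ' * x) * V x) (Set.Ioi 0))
    (hVlim : Tendsto (fun x => Real.exp (-Φ' * x) * V x) atTop (nhds c')) :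
    Tendsto (fun b => (deriv W (b - a)
        + r * ∫ y in (0:ℝ)..b, V (b - y) * deriv W (y - a)) / V b)
      atTop
      (nhds (Φ' * Real.exp (-Φ' * a) *
          (1 - r * ∫ z in (0:ℝ)..(-a), Real.exp (-Φ' * z) * W z)
        - r * W (-a))) := by
  set g : ℝ → ℝ := fun x ↦ exp (-Φ' * x) * V x with hg
  have hV : ∀ x, V x = exp (Φ' * x) * g x := fun x ↦ by
    rw [hg, ← mul_assoc, ← exp_add]; ring_nf; simp
  have hW'_norm : ∀ y > 0, ‖deriv W y‖ ≤ C * exp (Φ * y) := fun y hy ↦ by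
    rw [Real.norm_of_nonneg (hWmono.deriv_nonneg_of_mem_interior (by simpa using hy))]
    exact hWderivbound y hy
  have hWi : IntegrableOn (fun z ↦ exp (-Φ' * z) * W z) (Ioi 0) :=
    .of_integral_ne_zero (by rw [hWlap]; positivity)
  have hW'i : IntegrableOn (fun z ↦ exp (-Φ' * z) * deriv W z) (Ioi (-a)) :=
    integrableOn_exp_neg_mul_mul_of_norm_le hΦΦ' (measurable_deriv W).aestronglyMeasurable
      fun z hz ↦ hW'_norm z (by linarith)
  have hk : IntegrableOn (fun y ↦ exp (-Φ' * y) * deriv W (y - a)) (Ioi 0) :=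
    integrableOn_exp_neg_mul_mul_of_norm_le hΦΦ'
      ((measurable_deriv W).comp (measurable_id.sub_const a)).aestronglyMeasurable
      fun y hy ↦ norm_comp_sub_le_exp hW'_norm y (by linarith)
  have hvalue : r * ∫ y in Ioi 0, exp (-Φ' * y) * deriv W (y - a) = Φ' * exp (-Φ' * a) *
      (1 - r * ∫ z in (0:ℝ)..(-a), exp (-Φ' * z) * W z) - r * W (-a) := by
    rw [integral_Ioi_exp_neg_mul_mul_deriv_comp_sub ha.le (fun x hx ↦ hWdiff x (by linarith))
      hWi hW'i, hWlap]
    field_simp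
  have hdecomp : ∀ᶠ b in atTop, exp (-Φ' * b) * deriv W (b - a) / g b
      + r * ∫ y in (0:ℝ)..b, g (b - y) / g b * (exp (-Φ' * y) * deriv W (y - a))
      = (deriv W (b - a) + r * ∫ y in (0:ℝ)..b, V (b - y) * deriv W (y - a)) / V b :=
    (hVlim.eventually (eventually_gt_nhds hc')).mono fun b hb ↦
      (convolution_div_eq_of_eq_exp_mul _ r hV hb.ne').symm
  rw [← hvalue]
  refine Tendsto.congr' hdecomp ?_
  have hlim := ((tendsto_exp_neg_mul_mul_of_norm_le hΦΦ'
    ((eventually_gt_atTop a).mono (norm_comp_sub_le_exp hW'_norm))).div hVlim hc'.ne').add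
    ((tendsto_intervalIntegral_div_mul hc' (fun x _ ↦ mul_nonneg (exp_pos _).le (hVnn x)) hVmono
      hVlim hk).const_mul r)
  rwa [zero_div, zero_add] at hlim

/-- convergence of `M_a^{(q,r)}W^{(q)′}(b)/W^{(q+r)}(b)` as `b → ∞`
(proof of Corollary 3.5(ii), creeping). -/
theorem stmt_18 (r Φ Φ' C c' a : ℝ) (hr : 0 < r) (hΦ : 0 ≤ Φ) (hΦΦ' : Φ < Φ')
    (hC : 0 < C) (hc' : 0 < c') (ha : a < 0)
    (W V : ℝ → ℝ) (hW0 : ∀ x < 0, W x = 0)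
    (hWcont : ContinuousOn W (Set.Ici 0)) (hWmono : MonotoneOn W (Set.Ici 0))
    (hWdiff : ∀ y > (0:ℝ), DifferentiableAt ℝ W y)
    (hWderivcont : ContinuousOn (deriv W) (Set.Ioi 0))
    (hWderivbound : ∀ y > (0:ℝ), deriv W y ≤ C * Real.exp (Φ * y))
    (hWlap : (∫ z in Set.Ioi (0:ℝ), Real.exp (-Φ' * z) * W z) = 1 / r)
    (hVnn : ∀ x, 0 ≤ V x) (hV0 : ∀ x < 0, V x = 0)
    (hVmono : MonotoneOn (fun x => Real.exp (-Φ' * x) * V x) (Set.Ioi 0))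
    (hVlim : Tendsto (fun x => Real.exp (-Φ' * x) * V x) atTop (nhds c')) :
    Tendsto (fun b => (deriv W (b - a)
        + r * ∫ y in (0:ℝ)..b, V (b - y) * deriv W (y - a)) / V b)
      atTop
      (nhds (Φ' * Real.exp (-Φ' * a) *
          (1 - r * ∫ z in (0:ℝ)..(-a), Real.exp (-Φ' * z) * W z)
        - r * W (-a))) :=
  stmt_18_general r Φ Φ' C c' a hr hΦΦ' hc' ha W V hWmono hWdiff hWderivbound hWlap hVnn hVmono
    hVlim
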